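/- Let (Λ,η) be a special isothermic surface in S^n of type d with respect to a polynomial conserved quantity p(t), let Λ̂ be a Darboux transform of (Λ,η) with spectral parameter m, and let G be a (d + mη)-parallel lift of Λ̂. Then: (1) the function (p(m),G) is constant on Σ; and (2) if (p(m),G) = 0, then (Λ̂,η̂) is a special isothermic surface of type d with respect to a polynomial conserved quantity p̂(t) satisfying p̂(0) = p(0) and (p̂(t),p̂(t)) = (p(t),p(t)) as polynomials in t. -/

import Mathlib

noncomputable section

open Finset

/-- Minkowski space `ℝ^{n+1,1}`, modelled on `Fin (n+2) → ℝ`. -/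
abbrev MV (n : ℕ) : Type := EuclideanSpace ℝ (Fin (n + 2))

/-- The Minkowski inner product of signature `(n+1,1)`. -/
def mink (n : ℕ) (x y : MV n) : ℝ :=
  ∑ i : Fin (n + 1), x i.castSucc * y i.castSucc
    - x (Fin.last (n + 1)) * y (Fin.last (n + 1))

/-- The light cone `L ⊂ ℝ^{n+1,1}`. -/
def LightCone (n : ℕ) : Set (MV n) := {v | v ≠ 0 ∧ mink n v v = 0}

/-- The skew endomorphism `u ∧ v`, acting by `(u ∧ v) w = (u,w)v − (v,w)u`. -/
def wedge (n : ℕ) (u v w : MV n) : MV n :=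
  mink n u w • v - mink n v w • u

/-- The surface domain: a two-dimensional coordinate chart. -/
abbrev Surf : Type := ℝ × ℝ

/-- the coordinate direction ∂/∂u -/
def du : Surf := (1, 0)

/-- the coordinate direction ∂/∂v -/
def dv : Surf := (0, 1)

/-- partial derivative of a section in a coordinate direction -/
def pd {n : ℕ} (e : Surf) (f : Surf → MV n) (x : Surf) : MV n :=
  fderiv ℝ f x e

lemma mink_add_left (n : ℕ) (a b c : MV n) :
    mink n (a + b) c = mink n a c + mink n b c := by
  simp [mink, PiLp.add_apply, add_mul, Finset.sum_add_distrib]; ring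

lemma mink_smul_left (n : ℕ) (r : ℝ) (a c : MV n) :
    mink n (r • a) c = r * mink n a c := by
  simp [mink, PiLp.smul_apply, smul_eq_mul, mul_sub, Finset.mul_sum, mul_assoc]

lemma mink_zero_left (n : ℕ) (c : MV n) : mink n 0 c = 0 := by
  simp [mink]

/-- An isothermic surface `(Λ,η)` in `S^n = P(L)`, given by a nowhere-zero null
lift `F` of the immersion `Λ` together with the 1-form
`η = F ∧ W₁ du + F ∧ W₂ dv` with values in `Λ ∧ Λ^⊥`. -/
structure IsothermicSurface (n : ℕ) : Type where
  F : Surf → MV n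
  W₁ : Surf → MV n
  W₂ : Surf → MV n
  smooth_F : ContDiff ℝ (⊤ : ℕ∞) F
  smooth_W₁ : ContDiff ℝ (⊤ : ℕ∞) W₁
  smooth_W₂ : ContDiff ℝ (⊤ : ℕ∞) W₂
  F_ne : ∀ x, F x ≠ 0
  F_null : ∀ x, mink n (F x) (F x) = 0
  immersed : ∀ x, LinearIndependent ℝ ![F x, pd du F x, pd dv F x]
  W₁_perp : ∀ x, mink n (F x) (W₁ x) = 0
  W₂_perp : ∀ x, mink n (F x) (W₂ x) = 0
  eta_ne : ∃ x z, wedge n (F x) (W₁ x) z ≠ 0 ∨ wedge n (F x) (W₂ x) z ≠ 0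
  eta_closed : ∀ x z,
    fderiv ℝ (fun y => wedge n (F y) (W₂ y) z) x du
      = fderiv ℝ (fun y => wedge n (F y) (W₁ y) z) x dv

/-- `s` is a parallel section for the flat connection `∇^t = d + tη`. -/
def ParallelSection (n : ℕ) (S : IsothermicSurface n) (t : ℝ)
    (s : Surf → MV n) : Prop :=
  ∀ x, fderiv ℝ s x du + t • wedge n (S.F x) (S.W₁ x) (s x) = 0
     ∧ fderiv ℝ s x dv + t • wedge n (S.F x) (S.W₂ x) (s x) = 0

/-- A polynomial conserved quantity of degree `d` of the isothermic surface
`(Λ,η)`: a polynomial `p(t) = Σ_{k=0}^d p_k t^k` of (smooth) sections, of exact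
degree `d`, with `∇^t p(t) = 0` for all `t`. -/
structure PolyConservedQuantity (n : ℕ) (S : IsothermicSurface n) (d : ℕ) : Type where
  coeff : ℕ → Surf → MV n
  smooth : ∀ k, ContDiff ℝ (⊤ : ℕ∞) (coeff k)
  coeff_eq_zero : ∀ k, d < k → coeff k = 0
  top_ne : coeff d ≠ 0
  conserved : ∀ t : ℝ, ParallelSection n S t
    (fun x => ∑ k ∈ Finset.range (d + 1), t ^ k • coeff k x)

/-- evaluation `p(t)` of a polynomial conserved quantity -/
def pcEval {n : ℕ} {S : IsothermicSurface n} {d : ℕ}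
    (p : PolyConservedQuantity n S d) (t : ℝ) (x : Surf) : MV n :=
  ∑ k ∈ Finset.range (d + 1), t ^ k • p.coeff k x

/-- `(Λ,η)` is a special isothermic surface of type `d`. -/
def SpecialOfType (n : ℕ) (S : IsothermicSurface n) (d : ℕ) : Prop :=
  Nonempty (PolyConservedQuantity n S d)

/-- `p₀ ∈ ⟨w⟩`: the polynomial conserved quantity exhibits `(Λ,η)` as special
isothermic in the space-form `E(w)`. -/
def InSpaceForm {n : ℕ} {S : IsothermicSurface n} {d : ℕ}
    (p : PolyConservedQuantity n S d) (w : MV n) : Prop :=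
  ∃ c : ℝ, ∀ x, p.coeff 0 x = c • w

/-- fullness: the image of `Λ` lies in no proper subsphere -/
def Full (n : ℕ) (S : IsothermicSurface n) : Prop :=
  ¬ ∃ p : MV n, p ≠ 0 ∧ ∀ x, mink n p (S.F x) = 0
/-- A Darboux transform `Λ̂` of `(Λ,η)` with parameter `m`, given by a
`∇^m`-parallel null lift `G` spanning an immersed surface with `Λ̂ ∩ Λ = 0`. -/
structure DarbouxTransform (n : ℕ) (S : IsothermicSurface n) (m : ℝ) : Type where
  G : Surf → MV n
  smooth_G : ContDiff ℝ (⊤ : ℕ∞) G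
  G_ne : ∀ x, G x ≠ 0
  G_null : ∀ x, mink n (G x) (G x) = 0
  immersed : ∀ x, LinearIndependent ℝ ![G x, pd du G x, pd dv G x]
  disjoint : ∀ x, G x ∉ Submodule.span ℝ {S.F x}
  parallel : ParallelSection n S m G

/-- The gauge transformation `Γ_{⟨F⟩}^{⟨G⟩}(c)`: acts as `c` on `⟨G⟩`, as `1` on
`(⟨F⟩ ⊕ ⟨G⟩)^⊥` and as `c⁻¹` on `⟨F⟩`. -/
def gaugeG (n : ℕ) (F G : MV n) (c : ℝ) (z : MV n) : MV n :=
  ((mink n G z / mink n F G) / c) • F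
    + (c * (mink n F z / mink n F G)) • G
    + (z - (mink n G z / mink n F G) • F - (mink n F z / mink n F G) • G)

/-- `Γ_Λ^{Λ̂}(1 − t/m) · (d + tη) = d + tη̂` for all `t ≠ m`: the gauge relation
between the pencils of flat connections of an isothermic surface `S` and of (an
isothermic structure `T` on) its Darboux transform with parameter `m`. -/
def GaugeRel (n : ℕ) (S T : IsothermicSurface n) (m : ℝ) : Prop :=
  ∀ t : ℝ, t ≠ m → ∀ s : Surf → MV n, ContDiff ℝ (⊤ : ℕ∞) s → ∀ x : Surf,
    (fderiv ℝ (fun y => gaugeG n (S.F y) (T.F y) (1 - t / m) (s y)) x du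
        + t • wedge n (T.F x) (T.W₁ x) (gaugeG n (S.F x) (T.F x) (1 - t / m) (s x))
      = gaugeG n (S.F x) (T.F x) (1 - t / m)
          (fderiv ℝ s x du + t • wedge n (S.F x) (S.W₁ x) (s x)))
    ∧ (fderiv ℝ (fun y => gaugeG n (S.F y) (T.F y) (1 - t / m) (s y)) x dv
        + t • wedge n (T.F x) (T.W₂ x) (gaugeG n (S.F x) (T.F x) (1 - t / m) (s x))
      = gaugeG n (S.F x) (T.F x) (1 - t / m)
          (fderiv ℝ s x dv + t • wedge n (S.F x) (S.W₂ x) (s x)))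

/-- `Λ̂ = ⟨p(m)⟩` with `(p(m),p(m)) = 0`: the Darboux transform `D` is a
complementary surface of `(Λ,η)` with respect to `p(t)`. -/
def IsComplementary (n : ℕ) {S : IsothermicSurface n} {d : ℕ}
    (p : PolyConservedQuantity n S d) {m : ℝ} (D : DarbouxTransform n S m) : Prop :=
  (∀ x, mink n (pcEval p m x) (pcEval p m x) = 0) ∧
  (∀ x, Submodule.span ℝ {D.G x} = Submodule.span ℝ {pcEval p m x})

/-- `m` is a repeated root of the (constant-coefficient) polynomial `(p(t),p(t))`. -/
def IsRepeatedRootAt {n : ℕ} {S : IsothermicSurface n} {d : ℕ}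
    (p : PolyConservedQuantity n S d) (m : ℝ) : Prop :=
  ∀ x, mink n (pcEval p m x) (pcEval p m x) = 0
    ∧ deriv (fun t : ℝ => mink n (pcEval p t x) (pcEval p t x)) m = 0
/-- metric coefficient `g₁₁ = (F_u,F_u)` of the induced metric -/
def gUU (n : ℕ) (F : Surf → MV n) (x : Surf) : ℝ := mink n (pd du F x) (pd du F x)

/-- metric coefficient `g₁₂ = (F_u,F_v)` -/
def gUV (n : ℕ) (F : Surf → MV n) (x : Surf) : ℝ := mink n (pd du F x) (pd dv F x)

/-- metric coefficient `g₂₂ = (F_v,F_v)` -/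
def gVV (n : ℕ) (F : Surf → MV n) (x : Surf) : ℝ := mink n (pd dv F x) (pd dv F x)

/-- `(𝐇, N)`, the inner product of the mean curvature vector of `F` (in a
space-form `E(w)`) with a normal field `N`: half the trace with respect to the
induced metric of the `N`-component of the second fundamental form. -/
def meanCurv (n : ℕ) (F N : Surf → MV n) (x : Surf) : ℝ :=
  (gVV n F x * mink n (pd du (pd du F) x) (N x)
    - 2 * gUV n F x * mink n (pd du (pd dv F) x) (N x)
    + gUU n F x * mink n (pd dv (pd dv F) x) (N x))
  / (2 * (gUU n F x * gVV n F x - gUV n F x ^ 2))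

/-- `N` is a unit normal field of the lift `F : Σ → E(w)`. -/
def IsUnitNormal (n : ℕ) (F N : Surf → MV n) (w : MV n) : Prop :=
  (∀ x, mink n (N x) (N x) = 1) ∧ (∀ x, mink n (N x) w = 0)
    ∧ (∀ x, mink n (N x) (F x) = 0)
    ∧ (∀ x, mink n (N x) (pd du F x) = 0) ∧ (∀ x, mink n (N x) (pd dv F x) = 0)

/-- `N` is parallel for the normal connection of `F : Σ → E(w)`: the derivative
of `N` has no component in the normal bundle of `F` in `E(w)`. -/
def ParallelNormal (n : ℕ) (F N : Surf → MV n) (w : MV n) : Prop :=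
  ∀ x e, fderiv ℝ N x e ∈ Submodule.span ℝ {F x, pd du F x, pd dv F x, w}

/-- the chart coordinates `(u,v)` are conformal curvature line coordinates
corresponding to `η`, with conformal factor `e^{2θ}`:
`I = e^{2θ}(du² + dv²)` and `η = e^{−2θ} F ∧ (−F_u du + F_v dv)`. -/
def ConformalCoords (n : ℕ) (S : IsothermicSurface n) (θ : Surf → ℝ) : Prop :=
  ContDiff ℝ (⊤ : ℕ∞) θ
  ∧ (∀ x, mink n (pd du S.F x) (pd du S.F x) = Real.exp (2 * θ x))
  ∧ (∀ x, mink n (pd dv S.F x) (pd dv S.F x) = Real.exp (2 * θ x))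
  ∧ (∀ x, mink n (pd du S.F x) (pd dv S.F x) = 0)
  ∧ (∀ x z, wedge n (S.F x) (S.W₁ x) z
      = Real.exp (-(2 * θ x)) • wedge n (S.F x) (-pd du S.F x) z)
  ∧ (∀ x z, wedge n (S.F x) (S.W₂ x) z
      = Real.exp (-(2 * θ x)) • wedge n (S.F x) (pd dv S.F x) z)

/-- the second fundamental form of the lift `F` in `E(w)` with respect to the
unit normal `N` is `II = e^{2θ}(k₁ du² + k₂ dv²)`. -/
def PrincipalCurvatures (n : ℕ) (S : IsothermicSurface n) (N : Surf → MV n)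
    (θ k₁ k₂ : Surf → ℝ) : Prop :=
  (∀ x, mink n (pd du (pd du S.F) x) (N x) = Real.exp (2 * θ x) * k₁ x)
  ∧ (∀ x, mink n (pd du (pd dv S.F) x) (N x) = 0)
  ∧ (∀ x, mink n (pd dv (pd dv S.F) x) (N x) = Real.exp (2 * θ x) * k₂ x)

/-- partial derivative of a real function on the surface -/
def pdR (e : Surf) (f : Surf → ℝ) (x : Surf) : ℝ := fderiv ℝ f x e
/-- `(Λ^c, η^c)` is the Christoffel transform of `(Λ,η)` with respect to the
pair `(v∞, v₀)`, witnessed by the stereoprojections `f`, `f^c` into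
`ℝ^n = ⟨v₀,v∞⟩^⊥`:  `F = exp(f ∧ v∞)v₀`, `F^c = exp(f^c ∧ v₀)v∞`,
`η = Ad(exp(f ∧ v∞))(df^c ∧ v₀)` and `η^c = Ad(exp(f^c ∧ v₀))(df ∧ v∞)`. -/
def IsChristoffelPair (n : ℕ) (S Sc : IsothermicSurface n) (vinf v0 : MV n)
    (f fc : Surf → MV n) : Prop :=
  vinf ∈ LightCone n ∧ v0 ∈ LightCone n ∧ mink n v0 vinf = -1
  ∧ ContDiff ℝ (⊤ : ℕ∞) f ∧ ContDiff ℝ (⊤ : ℕ∞) fc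
  ∧ (∀ x, mink n (f x) v0 = 0) ∧ (∀ x, mink n (f x) vinf = 0)
  ∧ (∀ x, mink n (fc x) v0 = 0) ∧ (∀ x, mink n (fc x) vinf = 0)
  ∧ (∀ x, S.F x = v0 + f x + (mink n (f x) (f x) / 2) • vinf)
  ∧ (∀ x, Sc.F x = vinf + fc x + (mink n (fc x) (fc x) / 2) • v0)
  ∧ (∀ x z, wedge n (S.F x) (S.W₁ x) z
      = wedge n (pd du fc x + mink n (f x) (pd du fc x) • vinf) (S.F x) z)
  ∧ (∀ x z, wedge n (S.F x) (S.W₂ x) z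
      = wedge n (pd dv fc x + mink n (f x) (pd dv fc x) • vinf) (S.F x) z)
  ∧ (∀ x z, wedge n (Sc.F x) (Sc.W₁ x) z
      = wedge n (pd du f x + mink n (fc x) (pd du f x) • v0) (Sc.F x) z)
  ∧ (∀ x z, wedge n (Sc.F x) (Sc.W₂ x) z
      = wedge n (pd dv f x + mink n (fc x) (pd dv f x) • v0) (Sc.F x) z)

/-- `Φ` is an orthogonal gauge transformation with `Φ · (d + sη) = d`. -/
def IsTGauge (n : ℕ) (S : IsothermicSurface n) (s : ℝ)
    (Φ : Surf → MV n → MV n) : Prop :=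
  (∀ x, IsLinearMap ℝ (Φ x))
  ∧ (∀ x z z', mink n (Φ x z) (Φ x z') = mink n z z')
  ∧ (∀ σ : Surf → MV n, ContDiff ℝ (⊤ : ℕ∞) σ → ∀ x,
      (fderiv ℝ (fun y => Φ y (σ y)) x du
         = Φ x (fderiv ℝ σ x du + s • wedge n (S.F x) (S.W₁ x) (σ x)))
      ∧ (fderiv ℝ (fun y => Φ y (σ y)) x dv
         = Φ x (fderiv ℝ σ x dv + s • wedge n (S.F x) (S.W₂ x) (σ x))))

/-- `(Λ_s, η_s)` is the T-transform of `(Λ,η)` associated to `Φ_s`: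
`Λ_s = Φ_s Λ` and `η_s = Ad(Φ_s) η`. -/
def IsTTransform (n : ℕ) (S : IsothermicSurface n) (s : ℝ)
    (Φ : Surf → MV n → MV n) (Ss : IsothermicSurface n) : Prop :=
  IsTGauge n S s Φ
  ∧ (∀ x, Ss.F x = Φ x (S.F x))
  ∧ (∀ x z, wedge n (Ss.F x) (Ss.W₁ x) (Φ x z) = Φ x (wedge n (S.F x) (S.W₁ x) z))
  ∧ (∀ x z, wedge n (Ss.F x) (Ss.W₂ x) (Φ x z) = Φ x (wedge n (S.F x) (S.W₂ x) z))

/-- orthogonal complement with respect to the Minkowski form -/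
def mperp (n : ℕ) (U : Submodule ℝ (MV n)) : Submodule ℝ (MV n) where
  carrier := {v | ∀ u ∈ U, mink n v u = 0}
  add_mem' := by
    intro a b ha hb u hu
    rw [mink_add_left, ha u hu, hb u hu, add_zero]
  zero_mem' := by
    intro u hu; exact mink_zero_left n u
  smul_mem' := by
    intro r a ha u hu
    rw [mink_smul_left, ha u hu, mul_zero]

/-- the spherical system of `Λ` and a Darboux transform `Λ̂ = ⟨G⟩`: the
`(n−2)`-sphere congruence `C = Λ ⊕ Λ̂ ⊕ V_R^⊥`, `V_R = Λ^{(1)} ⊕ Λ̂`. -/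
def sphericalSystem (n : ℕ) (S : IsothermicSurface n) (G : Surf → MV n)
    (x : Surf) : Submodule ℝ (MV n) :=
  Submodule.span ℝ {S.F x, G x}
    ⊔ mperp n (Submodule.span ℝ {S.F x, pd du S.F x, pd dv S.F x, G x})

/-- the sphere-planes congruence `P = C + ⟨w⟩` of `Λ` and `Λ̂ = ⟨G⟩` with
respect to `w`. -/
def spherePlanes (n : ℕ) (S : IsothermicSurface n) (G : Surf → MV n)
    (w : MV n) (x : Surf) : Submodule ℝ (MV n) :=
  sphericalSystem n S G x ⊔ Submodule.span ℝ {w}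

-- ===== auxiliary lemmas =====
section Helpers

lemma MV_sum_apply {n : ℕ} (s : Finset ℕ) (w : ℕ → MV n) (i : Fin (n + 2)) :
    (∑ k ∈ s, w k) i = ∑ k ∈ s, w k i := by
  induction s using Finset.cons_induction with
  | empty => rfl
  | cons a s ha ih => simp [Finset.sum_insert ha, PiLp.add_apply, ih]

lemma mink_symm (n : ℕ) (a b : MV n) : mink n a b = mink n b a := by
  simp [mink, mul_comm]

lemma mink_add_right (n : ℕ) (a b c : MV n) :
    mink n a (b + c) = mink n a b + mink n a c := by
  rw [mink_symm, mink_add_left, mink_symm n b a, mink_symm n c a]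

lemma mink_smul_right (n : ℕ) (r : ℝ) (a c : MV n) :
    mink n a (r • c) = r * mink n a c := by
  rw [mink_symm, mink_smul_left, mink_symm]

lemma mink_zero_right (n : ℕ) (c : MV n) : mink n c 0 = 0 := by
  rw [mink_symm, mink_zero_left]

lemma mink_sub_left (n : ℕ) (a b c : MV n) :
    mink n (a - b) c = mink n a c - mink n b c := by
  simp [mink, PiLp.sub_apply, sub_mul, Finset.sum_sub_distrib]; ring

lemma mink_sub_right (n : ℕ) (a b c : MV n) :
    mink n a (b - c) = mink n a b - mink n a c := by
  rw [mink_symm, mink_sub_left, mink_symm n b a, mink_symm n c a]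

lemma mink_sum_right (n : ℕ) (a : MV n) (s : Finset ℕ) (f : ℕ → MV n) :
    mink n a (∑ k ∈ s, f k) = ∑ k ∈ s, mink n a (f k) := by
  induction s using Finset.cons_induction with
  | empty => simp [mink_zero_right]
  | cons j s hj ih => simp [Finset.sum_insert hj, mink_add_right, ih]

def minkL2 (n : ℕ) : MV n →ₗ[ℝ] MV n →ₗ[ℝ] ℝ :=
  LinearMap.mk₂ ℝ (mink n) (mink_add_left n)
    (fun c a b => by simpa using mink_smul_left n c a b)
    (mink_add_right n)
    (fun c a b => by simpa using mink_smul_right n c a b)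

def minkB (n : ℕ) : MV n →L[ℝ] MV n →L[ℝ] ℝ :=
  LinearMap.toContinuousLinearMap
    (((LinearMap.toContinuousLinearMap :
        (MV n →ₗ[ℝ] ℝ) ≃ₗ[ℝ] (MV n →L[ℝ] ℝ)).toLinearMap).comp (minkL2 n))

lemma minkB_apply (n : ℕ) (x y : MV n) : minkB n x y = mink n x y := rfl

lemma contDiff_mink {n : ℕ} {f g : Surf → MV n}
    (hf : ContDiff ℝ (⊤ : ℕ∞) f) (hg : ContDiff ℝ (⊤ : ℕ∞) g) :
    ContDiff ℝ (⊤ : ℕ∞) (fun y => mink n (f y) (g y)) := by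
  have : ContDiff ℝ (⊤ : ℕ∞) (fun y => minkB n (f y) (g y)) :=
    (((minkB n).contDiff).comp hf).clm_apply hg
  simpa [minkB_apply] using this

lemma fderiv_mink_apply {n : ℕ} {f g : Surf → MV n} {x : Surf}
    (hf : DifferentiableAt ℝ f x) (hg : DifferentiableAt ℝ g x) (e : Surf) :
    fderiv ℝ (fun y => mink n (f y) (g y)) x e
      = mink n (fderiv ℝ f x e) (g x) + mink n (f x) (fderiv ℝ g x e) := by
  have h1 : HasFDerivAt (fun y => (minkB n) (f y)) ((minkB n).comp (fderiv ℝ f x)) x :=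
    ((minkB n).hasFDerivAt).comp x hf.hasFDerivAt
  have h2 := h1.clm_apply hg.hasFDerivAt
  have hfun : (fun y => mink n (f y) (g y)) = fun y => minkB n (f y) (g y) := by
    funext y; rw [minkB_apply]
  rw [hfun, h2.fderiv]
  simp [ContinuousLinearMap.add_apply, ContinuousLinearMap.comp_apply,
    ContinuousLinearMap.flip_apply, minkB_apply, add_comm]

lemma wedge_zero_right (n : ℕ) (u v : MV n) : wedge n u v 0 = 0 := by
  simp [wedge, mink_zero_right]

lemma wedge_add_right (n : ℕ) (u v a b : MV n) :
    wedge n u v (a + b) = wedge n u v a + wedge n u v b := by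
  simp [wedge, mink_add_right, add_smul]; abel

lemma wedge_smul_right (n : ℕ) (u v : MV n) (r : ℝ) (a : MV n) :
    wedge n u v (r • a) = r • wedge n u v a := by
  simp [wedge, mink_smul_right, smul_sub, smul_smul]

lemma wedge_sum_right (n : ℕ) (u v : MV n) (s : Finset ℕ) (f : ℕ → MV n) :
    wedge n u v (∑ k ∈ s, f k) = ∑ k ∈ s, wedge n u v (f k) := by
  induction s using Finset.cons_induction with
  | empty => simp [wedge_zero_right]
  | cons j s hj ih => simp [Finset.sum_insert hj, wedge_add_right, ih]

lemma wedge_smul_mid (n : ℕ) (u : MV n) (r : ℝ) (v w : MV n) :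
    wedge n u (r • v) w = r • wedge n u v w := by
  simp [wedge, mink_smul_left, smul_sub, smul_smul, mul_comm]

lemma wedge_self (n : ℕ) (u w : MV n) : wedge n u u w = 0 := by
  simp [wedge]

lemma mink_wedge_skew (n : ℕ) (u v a b : MV n) :
    mink n (wedge n u v a) b + mink n a (wedge n u v b) = 0 := by
  have h1 : mink n a v = mink n v a := mink_symm n a v
  have h2 : mink n a u = mink n u a := mink_symm n a u
  simp only [wedge, mink_sub_left, mink_sub_right, mink_smul_left, mink_smul_right]
  rw [h1, h2]; ring

lemma li_two {n : ℕ} {A B C : MV n} (h : LinearIndependent ℝ ![A, B, C])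
    {a b : ℝ} (hab : a • A + b • B = 0) : a = 0 ∧ b = 0 := by
  have h2 := (Fintype.linearIndependent_iff.mp h) ![a, b, 0] ?_
  · exact ⟨h2 0, h2 1⟩
  · rw [Fin.sum_univ_three]
    simpa using hab

lemma mink_ne_of_null {n : ℕ} {F G : MV n} (hF0 : F ≠ 0) (hFn : mink n F F = 0)
    (hGn : mink n G G = 0) (hG : G ∉ Submodule.span ℝ {F}) : mink n F G ≠ 0 := by
  intro hFG
  set l := Fin.last (n + 1) with hl
  have hFs : ∑ i : Fin (n + 1), F i.castSucc * F i.castSucc = F l * F l := by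
    unfold mink at hFn; linarith
  have hGs : ∑ i : Fin (n + 1), G i.castSucc * G i.castSucc = G l * G l := by
    unfold mink at hGn; linarith
  have hFGs : ∑ i : Fin (n + 1), F i.castSucc * G i.castSucc = F l * G l := by
    unfold mink at hFG; linarith
  by_cases hfl : F l = 0
  · apply hF0
    have hz : ∑ i : Fin (n + 1), F i.castSucc * F i.castSucc = 0 := by
      rw [hFs, hfl]; ring
    have hco : ∀ i : Fin (n + 1), F i.castSucc = 0 := by
      intro i
      have := (Finset.sum_eq_zero_iff_of_nonneg
        (fun j _ => mul_self_nonneg (F j.castSucc))).mp hz i (Finset.mem_univ i)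
      exact mul_self_eq_zero.mp this
    ext j
    refine Fin.lastCases ?_ ?_ j
    · exact hfl
    · exact hco
  · set c := G l / F l with hc
    have hcl : G l = c * F l := by rw [hc, div_mul_cancel₀ _ hfl]
    have hz : ∑ i : Fin (n + 1),
        (G i.castSucc - c * F i.castSucc) * (G i.castSucc - c * F i.castSucc) = 0 := by
      have expand : ∀ i : Fin (n + 1), (G i.castSucc - c * F i.castSucc) *
          (G i.castSucc - c * F i.castSucc)
          = G i.castSucc * G i.castSucc - (2 * c) * (F i.castSucc * G i.castSucc)
            + (c * c) * (F i.castSucc * F i.castSucc) := fun i => by ring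
      rw [Finset.sum_congr rfl (fun i _ => expand i)]
      rw [Finset.sum_add_distrib, Finset.sum_sub_distrib, ← Finset.mul_sum, ← Finset.mul_sum]
      rw [hGs, hFGs, hFs, hcl]
      ring
    have hco : ∀ i : Fin (n + 1), G i.castSucc = c * F i.castSucc := by
      intro i
      have := (Finset.sum_eq_zero_iff_of_nonneg
        (fun j _ => mul_self_nonneg (G j.castSucc - c * F j.castSucc))).mp hz i
          (Finset.mem_univ i)
      have := mul_self_eq_zero.mp this
      linarith
    apply hG
    refine Submodule.mem_span_singleton.mpr ⟨c, ?_⟩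
    ext j
    have hsm : (c • F) j = c * F j := rfl
    rw [hsm]
    refine Fin.lastCases ?_ ?_ j
    · exact hcl.symm
    · exact fun i => (hco i).symm

lemma vec_coeffs_zero {n : ℕ} (K : ℕ) (mm : ℝ) (v : ℕ → MV n)
    (h : ∀ t : ℝ, t ≠ mm → ∑ k ∈ Finset.range K, t ^ k • v k = 0) :
    ∀ k < K, v k = 0 := by
  intro k hk
  ext i
  show v k i = (0 : MV n) i
  have hzero : (0 : MV n) i = 0 := rfl
  rw [hzero]
  set q : Polynomial ℝ := ∑ j ∈ Finset.range K, Polynomial.C (v j i) * Polynomial.X ^ j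
    with hq
  have hroot : ∀ t : ℝ, t ≠ mm → q.IsRoot t := by
    intro t ht
    have h2 := congrArg (fun z : MV n => z i) (h t ht)
    simp only [MV_sum_apply, PiLp.smul_apply, smul_eq_mul] at h2
    rw [hzero] at h2
    simp only [Polynomial.IsRoot, hq, Polynomial.eval_finset_sum, Polynomial.eval_mul,
      Polynomial.eval_C, Polynomial.eval_pow, Polynomial.eval_X]
    rw [← h2]
    exact Finset.sum_congr rfl fun j _ => by ring
  have hq0 : q = 0 := Polynomial.eq_zero_of_infinite_isRoot q
    (((Set.finite_singleton mm).infinite_compl).mono (fun t ht => hroot t ht))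
  have hcoeff : q.coeff k = v k i := by
    rw [hq]
    rw [Polynomial.finset_sum_coeff]
    simp only [Polynomial.coeff_C_mul, Polynomial.coeff_X_pow]
    rw [Finset.sum_congr rfl (fun j _ => by rw [mul_ite, mul_one, mul_zero])]
    rw [Finset.sum_ite_eq (Finset.range K) k (fun j => v j i)]
    simp [hk]
  rw [hq0] at hcoeff
  simpa using hcoeff.symm

end Helpers


section Helpers2

lemma clm_zero_of_dirs (L : Surf →L[ℝ] ℝ) (h1 : L du = 0) (h2 : L dv = 0) : L = 0 := by
  apply ContinuousLinearMap.ext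
  intro v
  have hv : v = v.1 • du + v.2 • dv := by
    simp [du, dv, Prod.ext_iff]
  conv_lhs => rw [hv]
  simp [map_add, map_smul, h1, h2]

lemma contDiff_poly_sum {n : ℕ} {c : ℕ → Surf → MV n} (hc : ∀ k, ContDiff ℝ (⊤ : ℕ∞) (c k))
    (K : ℕ) (t : ℝ) : ContDiff ℝ (⊤ : ℕ∞) (fun y => ∑ k ∈ Finset.range K, t ^ k • c k y) :=
  ContDiff.sum fun k _ => (hc k).const_smul (t ^ k)

lemma fderiv_poly_sum {n : ℕ} {c : ℕ → Surf → MV n} (hc : ∀ k, ContDiff ℝ (⊤ : ℕ∞) (c k))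
    (K : ℕ) (t : ℝ) (x e : Surf) :
    fderiv ℝ (fun y => ∑ k ∈ Finset.range K, t ^ k • c k y) x e
      = ∑ k ∈ Finset.range K, t ^ k • fderiv ℝ (c k) x e := by
  rw [fderiv_fun_sum (A := fun k y => t ^ k • c k y) (fun k _ => (((hc k).differentiable (by simp)) x).const_smul (t ^ k))]
  rw [ContinuousLinearMap.sum_apply]
  refine Finset.sum_congr rfl fun k _ => ?_
  rw [fderiv_fun_const_smul (((hc k).differentiable (by simp)) x) (t ^ k)]
  rfl

lemma sum_shift {n : ℕ} (K : ℕ) (t : ℝ) (B : ℕ → MV n) :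
    ∑ k ∈ Finset.range (K + 1), t ^ k • (if k = 0 then (0 : MV n) else B (k - 1))
      = t • ∑ k ∈ Finset.range K, t ^ k • B k := by
  rw [Finset.sum_range_succ' (fun k => t ^ k • (if k = 0 then (0 : MV n) else B (k - 1))) K]
  rw [Finset.smul_sum]
  simp [pow_succ', mul_smul]

lemma parallel_poly_form {n : ℕ} (d : ℕ) (Fx Wx : MV n) (c : ℕ → Surf → MV n)
    (hc : ∀ k, ContDiff ℝ (⊤ : ℕ∞) (c k)) (htop : c (d + 1) = 0) (x : Surf) (t : ℝ) (e : Surf) :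
    fderiv ℝ (fun y => ∑ k ∈ Finset.range (d + 1), t ^ k • c k y) x e
      + t • wedge n Fx Wx (∑ k ∈ Finset.range (d + 1), t ^ k • c k x)
    = ∑ k ∈ Finset.range (d + 2), t ^ k • (fderiv ℝ (c k) x e
        + if k = 0 then 0 else wedge n Fx Wx (c (k - 1) x)) := by
  have h1 : fderiv ℝ (fun y => ∑ k ∈ Finset.range (d + 1), t ^ k • c k y) x e
      = ∑ k ∈ Finset.range (d + 2), t ^ k • fderiv ℝ (c k) x e := by
    rw [fderiv_poly_sum hc (d + 1) t x e]
    have h0 : fderiv ℝ (c (d + 1)) x = 0 := by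
      have he : c (d + 1) = fun _ : Surf => (0 : MV n) := by rw [htop]; rfl
      rw [he]; simp
    conv_rhs => rw [show d + 2 = (d + 1) + 1 from rfl, Finset.sum_range_succ]
    rw [h0]
    simp
  have h2 : t • wedge n Fx Wx (∑ k ∈ Finset.range (d + 1), t ^ k • c k x)
      = ∑ k ∈ Finset.range (d + 2), t ^ k •
          (if k = 0 then (0 : MV n) else wedge n Fx Wx (c (k - 1) x)) := by
    rw [sum_shift (d + 1) t (fun k => wedge n Fx Wx (c k x))]
    congr 1
    rw [wedge_sum_right]
    refine Finset.sum_congr rfl fun k _ => ?_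
    rw [wedge_smul_right]
  rw [h1, h2, ← Finset.sum_add_distrib]
  refine Finset.sum_congr rfl fun k _ => ?_
  rw [smul_add]

lemma telescope (m t : ℝ) (hm : m ≠ 0) (b : ℕ → ℝ) : ∀ K : ℕ,
    (1 - t / m) * ∑ k ∈ Finset.range (K + 1),
        t ^ k * ((∑ j ∈ Finset.range (k + 1), m ^ j * b j) / m ^ k)
      = (∑ k ∈ Finset.range (K + 1), t ^ k * b k)
        - (t ^ (K + 1) / m ^ (K + 1)) * ∑ j ∈ Finset.range (K + 1), m ^ j * b j := by
  intro K
  induction K with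
  | zero => simp; field_simp
  | succ K ih =>
    rw [Finset.sum_range_succ (fun k => t ^ k *
      ((∑ j ∈ Finset.range (k + 1), m ^ j * b j) / m ^ k)) (K + 1)]
    rw [mul_add, ih]
    rw [Finset.sum_range_succ (fun k => t ^ k * b k) (K + 1)]
    rw [Finset.sum_range_succ (fun j => m ^ j * b j) (K + 1)]
    have hmp : (m : ℝ) ^ (K + 1) ≠ 0 := pow_ne_zero _ hm
    have hmp2 : (m : ℝ) ^ (K + 2) ≠ 0 := pow_ne_zero _ hm
    field_simp
    ring
end Helpers2

section Construction

variable {n d : ℕ} {S : IsothermicSurface n}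

/-- `α_k = (F,p_k)/(F,G)` -/
def alpf (p : PolyConservedQuantity n S d) (G : Surf → MV n) (k : ℕ) (x : Surf) : ℝ :=
  mink n (S.F x) (p.coeff k x) / mink n (S.F x) (G x)

/-- `β_k = (G,p_k)/(F,G)` -/
def betf (p : PolyConservedQuantity n S d) (G : Surf → MV n) (k : ℕ) (x : Surf) : ℝ :=
  mink n (G x) (p.coeff k x) / mink n (S.F x) (G x)

/-- `γ_k = (∑_{j≤k} m^j β_j)/m^k` -/
def gamf (p : PolyConservedQuantity n S d) (G : Surf → MV n) (m : ℝ) (k : ℕ) (x : Surf) : ℝ :=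
  (∑ j ∈ Finset.range (k + 1), m ^ j * betf p G j x) / m ^ k

/-- coefficients of the transformed conserved quantity `p̂(t) = Γ(1-t/m)p(t)` -/
def phcf (p : PolyConservedQuantity n S d) (G : Surf → MV n) (m : ℝ) : ℕ → Surf → MV n
  | 0 => fun x => p.coeff 0 x
  | (k + 1) => fun x => p.coeff (k + 1) x + ((1 / m) * gamf p G m k x) • S.F x
      - ((1 / m) * alpf p G k x) • G x

end Construction

section MainLemmas

variable {n d : ℕ} {S : IsothermicSurface n} {m : ℝ}

lemma FG_ne (D : DarbouxTransform n S m) (x : Surf) : mink n (S.F x) (D.G x) ≠ 0 :=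
  mink_ne_of_null (S.F_ne x) (S.F_null x) (D.G_null x) (D.disjoint x)

lemma cons_coeff (p : PolyConservedQuantity n S d) (x : Surf) :
    ∀ k < d + 2,
      (fderiv ℝ (p.coeff k) x du
        + (if k = 0 then 0 else wedge n (S.F x) (S.W₁ x) (p.coeff (k - 1) x)) = 0)
      ∧ (fderiv ℝ (p.coeff k) x dv
        + (if k = 0 then 0 else wedge n (S.F x) (S.W₂ x) (p.coeff (k - 1) x)) = 0) := by
  have hdu := vec_coeffs_zero (d + 2) 0 (fun k => fderiv ℝ (p.coeff k) x du
      + (if k = 0 then 0 else wedge n (S.F x) (S.W₁ x) (p.coeff (k - 1) x))) ?_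
  have hdv := vec_coeffs_zero (d + 2) 0 (fun k => fderiv ℝ (p.coeff k) x dv
      + (if k = 0 then 0 else wedge n (S.F x) (S.W₂ x) (p.coeff (k - 1) x))) ?_
  · exact fun k hk => ⟨hdu k hk, hdv k hk⟩
  · intro t _
    rw [← parallel_poly_form d (S.F x) (S.W₂ x) p.coeff p.smooth
      (p.coeff_eq_zero (d + 1) (by omega)) x t dv]
    exact (p.conserved t x).2
  · intro t _
    rw [← parallel_poly_form d (S.F x) (S.W₁ x) p.coeff p.smooth
      (p.coeff_eq_zero (d + 1) (by omega)) x t du]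
    exact (p.conserved t x).1

lemma wedgeG_ne (D : DarbouxTransform n S m) (x : Surf) :
    wedge n (S.F x) (S.W₁ x) (D.G x) ≠ 0 := by
  intro h
  have him := D.immersed x
  have hne : pd du D.G x ≠ 0 := by
    have := him.ne_zero 1
    simpa using this
  apply hne
  have h1 := (D.parallel x).1
  rw [h, smul_zero, add_zero] at h1
  exact h1

lemma Fpd_zero (hm : m ≠ 0) (p : PolyConservedQuantity n S d) (D : DarbouxTransform n S m)
    (x : Surf) : mink n (S.F x) (p.coeff d x) = 0 := by
  have hc := ((cons_coeff p x) (d + 1) (by omega)).1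
  have htop : fderiv ℝ (p.coeff (d + 1)) x = 0 := by
    have he : p.coeff (d + 1) = fun _ : Surf => (0 : MV n) := by
      rw [p.coeff_eq_zero (d + 1) (by omega)]; rfl
    rw [he]; simp
  rw [htop] at hc
  simp only [Nat.add_sub_cancel, Nat.succ_ne_zero, if_false, ContinuousLinearMap.zero_apply,
    zero_add] at hc
  -- hc : wedge n (S.F x) (S.W₁ x) (p.coeff d x) = 0
  set a := mink n (S.F x) (p.coeff d x) with ha
  set b := mink n (S.W₁ x) (p.coeff d x) with hb
  have hw : a • S.W₁ x = b • S.F x := by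
    have : a • S.W₁ x - b • S.F x = 0 := hc
    linear_combination (norm := module) this
  have hz : a • wedge n (S.F x) (S.W₁ x) (D.G x) = 0 := by
    rw [← wedge_smul_mid, hw, wedge_smul_mid, wedge_self, smul_zero]
  rcases smul_eq_zero.mp hz with h | h
  · exact h
  · exact absurd h (wedgeG_ne D x)

end MainLemmas


section MainLemmas2

variable {n d : ℕ} {S : IsothermicSurface n} {m : ℝ}

lemma mink_neg_left (n : ℕ) (a b : MV n) : mink n (-a) b = -mink n a b := by
  have := mink_smul_left n (-1) a b
  simpa using this

lemma alpf_smooth (p : PolyConservedQuantity n S d) (D : DarbouxTransform n S m) (k : ℕ) :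
    ContDiff ℝ (⊤ : ℕ∞) (alpf p D.G k) := by
  unfold alpf
  exact (contDiff_mink S.smooth_F (p.smooth k)).div
    (contDiff_mink S.smooth_F D.smooth_G) (FG_ne D)

lemma betf_smooth (p : PolyConservedQuantity n S d) (D : DarbouxTransform n S m) (k : ℕ) :
    ContDiff ℝ (⊤ : ℕ∞) (betf p D.G k) := by
  unfold betf
  exact (contDiff_mink D.smooth_G (p.smooth k)).div
    (contDiff_mink S.smooth_F D.smooth_G) (FG_ne D)

lemma gamf_smooth (p : PolyConservedQuantity n S d) (D : DarbouxTransform n S m) (k : ℕ) :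
    ContDiff ℝ (⊤ : ℕ∞) (gamf p D.G m k) := by
  unfold gamf
  exact (ContDiff.sum fun j _ => contDiff_const.mul (betf_smooth p D j)).div_const _

lemma phcf_smooth (p : PolyConservedQuantity n S d) (D : DarbouxTransform n S m) (k : ℕ) :
    ContDiff ℝ (⊤ : ℕ∞) (phcf p D.G m k) := by
  cases k with
  | zero => exact p.smooth 0
  | succ k =>
    exact ((p.smooth (k + 1)).add
      ((contDiff_const.mul (gamf_smooth p D k)).smul S.smooth_F)).sub
      ((contDiff_const.mul (alpf_smooth p D k)).smul D.smooth_G)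

lemma SB_zero (p : PolyConservedQuantity n S d) (D : DarbouxTransform n S m)
    (h0 : ∀ x, mink n (pcEval p m x) (D.G x) = 0) (x : Surf) :
    ∑ j ∈ Finset.range (d + 1), m ^ j * betf p D.G j x = 0 := by
  have h1 : mink n (D.G x) (∑ k ∈ Finset.range (d + 1), m ^ k • p.coeff k x) = 0 := by
    rw [mink_symm]; exact h0 x
  have h2 : mink n (D.G x) (∑ k ∈ Finset.range (d + 1), m ^ k • p.coeff k x)
      = (∑ j ∈ Finset.range (d + 1), m ^ j * betf p D.G j x) * mink n (S.F x) (D.G x) := by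
    unfold betf
    rw [mink_sum_right, Finset.sum_mul]
    refine Finset.sum_congr rfl fun k _ => ?_
    rw [mink_smul_right, mul_assoc, div_mul_cancel₀ _ (FG_ne D x)]
  rw [h2] at h1
  exact (mul_eq_zero.mp h1).resolve_right (FG_ne D x)

lemma alpf_ge_zero (hm : m ≠ 0) (p : PolyConservedQuantity n S d)
    (D : DarbouxTransform n S m) (k : ℕ) (hk : d ≤ k) (x : Surf) : alpf p D.G k x = 0 := by
  rcases eq_or_lt_of_le hk with h | h
  · unfold alpf; rw [← h, Fpd_zero hm p D x, zero_div]
  · unfold alpf; rw [p.coeff_eq_zero k h]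
    simp [mink_zero_right]

lemma betf_gt_zero (p : PolyConservedQuantity n S d) (D : DarbouxTransform n S m)
    (k : ℕ) (hk : d < k) (x : Surf) : betf p D.G k x = 0 := by
  unfold betf; rw [p.coeff_eq_zero k hk]
  simp [mink_zero_right]

lemma gamf_ge_zero (p : PolyConservedQuantity n S d) (D : DarbouxTransform n S m)
    (h0 : ∀ x, mink n (pcEval p m x) (D.G x) = 0)
    (k : ℕ) (hk : d ≤ k) (x : Surf) : gamf p D.G m k x = 0 := by
  unfold gamf
  have hsum : ∀ j, d ≤ j → ∑ i ∈ Finset.range (j + 1), m ^ i * betf p D.G i x = 0 := by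
    intro j hj
    induction j with
    | zero =>
      have hd : d = 0 := Nat.le_zero.mp hj
      have h2 : (0:ℕ) + 1 = d + 1 := by omega
      rw [h2]
      exact SB_zero p D h0 x
    | succ j ih =>
      rcases Nat.lt_or_ge d (j + 1) with h | h
      · have hj' : d ≤ j := by omega
        rw [Finset.sum_range_succ, ih hj', betf_gt_zero p D (j + 1) h x, mul_zero, add_zero]
      · have hd : d = j + 1 := le_antisymm hj h
        have h2 : j + 1 + 1 = d + 1 := by omega
        rw [h2]
        exact SB_zero p D h0 x
  rw [hsum k hk, zero_div]

lemma phcf_gt_zero (hm : m ≠ 0) (p : PolyConservedQuantity n S d)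
    (D : DarbouxTransform n S m) (h0 : ∀ x, mink n (pcEval p m x) (D.G x) = 0) :
    ∀ k, d < k → phcf p D.G m k = 0 := by
  intro k hk
  match k, hk with
  | (j + 1), hk =>
    funext x
    have hj : d ≤ j := by omega
    show p.coeff (j + 1) x + ((1 / m) * gamf p D.G m j x) • S.F x
        - ((1 / m) * alpf p D.G j x) • D.G x = 0
    rw [p.coeff_eq_zero (j + 1) hk, gamf_ge_zero p D h0 j hj x, alpf_ge_zero hm p D j hj x]
    simp

lemma mink_F_sum (p : PolyConservedQuantity n S d) (D : DarbouxTransform n S m)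
    (t : ℝ) (x : Surf) :
    mink n (S.F x) (∑ k ∈ Finset.range (d + 1), t ^ k • p.coeff k x)
      = (∑ k ∈ Finset.range (d + 1), t ^ k * alpf p D.G k x) * mink n (S.F x) (D.G x) := by
  unfold alpf
  rw [mink_sum_right, Finset.sum_mul]
  refine Finset.sum_congr rfl fun k _ => ?_
  rw [mink_smul_right, mul_assoc, div_mul_cancel₀ _ (FG_ne D x)]

lemma mink_G_sum (hm : m ≠ 0) (p : PolyConservedQuantity n S d) (D : DarbouxTransform n S m)
    (h0 : ∀ x, mink n (pcEval p m x) (D.G x) = 0) (t : ℝ) (x : Surf) :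
    mink n (D.G x) (∑ k ∈ Finset.range (d + 1), t ^ k • p.coeff k x)
      = ((1 - t / m) * ∑ k ∈ Finset.range (d + 1), t ^ k * gamf p D.G m k x)
          * mink n (S.F x) (D.G x) := by
  have h1 : mink n (D.G x) (∑ k ∈ Finset.range (d + 1), t ^ k • p.coeff k x)
      = (∑ k ∈ Finset.range (d + 1), t ^ k * betf p D.G k x) * mink n (S.F x) (D.G x) := by
    unfold betf
    rw [mink_sum_right, Finset.sum_mul]
    refine Finset.sum_congr rfl fun k _ => ?_
    rw [mink_smul_right, mul_assoc, div_mul_cancel₀ _ (FG_ne D x)]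
  rw [h1]
  congr 1
  have htel := telescope m t hm (fun j => betf p D.G j x) d
  unfold gamf
  rw [htel, SB_zero p D h0 x, mul_zero, sub_zero]

lemma phc_sum (hm : m ≠ 0) (p : PolyConservedQuantity n S d) (D : DarbouxTransform n S m)
    (h0 : ∀ x, mink n (pcEval p m x) (D.G x) = 0) (t : ℝ) (x : Surf) :
    ∑ k ∈ Finset.range (d + 1), t ^ k • phcf p D.G m k x
      = (∑ k ∈ Finset.range (d + 1), t ^ k • p.coeff k x)
        + ((t / m) * ∑ k ∈ Finset.range (d + 1), t ^ k * gamf p D.G m k x) • S.F x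
        - ((t / m) * ∑ k ∈ Finset.range (d + 1), t ^ k * alpf p D.G k x) • D.G x := by
  have hg : ∑ k ∈ Finset.range d, t ^ (k + 1) * ((1 / m) * gamf p D.G m k x)
      = (t / m) * ∑ k ∈ Finset.range (d + 1), t ^ k * gamf p D.G m k x := by
    rw [Finset.sum_range_succ, gamf_ge_zero p D h0 d le_rfl x, mul_zero, add_zero,
      Finset.mul_sum]
    refine Finset.sum_congr rfl fun k _ => ?_
    rw [pow_succ]
    ring
  have ha : ∑ k ∈ Finset.range d, t ^ (k + 1) * ((1 / m) * alpf p D.G k x)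
      = (t / m) * ∑ k ∈ Finset.range (d + 1), t ^ k * alpf p D.G k x := by
    rw [Finset.sum_range_succ, alpf_ge_zero hm p D d le_rfl x, mul_zero, add_zero,
      Finset.mul_sum]
    refine Finset.sum_congr rfl fun k _ => ?_
    rw [pow_succ]
    ring
  rw [Finset.sum_range_succ' (fun k => t ^ k • phcf p D.G m k x) d,
    Finset.sum_range_succ' (fun k => t ^ k • p.coeff k x) d]
  simp only [phcf, smul_add, smul_sub, smul_smul, Finset.sum_add_distrib,
    Finset.sum_sub_distrib, pow_zero, one_smul]
  rw [← Finset.sum_smul, ← Finset.sum_smul, hg, ha]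
  abel

lemma mink_phc (hm : m ≠ 0) (p : PolyConservedQuantity n S d) (D : DarbouxTransform n S m)
    (h0 : ∀ x, mink n (pcEval p m x) (D.G x) = 0) (t : ℝ) (x : Surf) :
    mink n (∑ k ∈ Finset.range (d + 1), t ^ k • phcf p D.G m k x)
        (∑ k ∈ Finset.range (d + 1), t ^ k • phcf p D.G m k x)
      = mink n (∑ k ∈ Finset.range (d + 1), t ^ k • p.coeff k x)
          (∑ k ∈ Finset.range (d + 1), t ^ k • p.coeff k x) := by
  rw [phc_sum hm p D h0 t x]
  have hFz := mink_F_sum p D t x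
  have hGz := mink_G_sum hm p D h0 t x
  have hzF : mink n (∑ k ∈ Finset.range (d + 1), t ^ k • p.coeff k x) (S.F x)
      = (∑ k ∈ Finset.range (d + 1), t ^ k * alpf p D.G k x) * mink n (S.F x) (D.G x) := by
    rw [mink_symm]; exact hFz
  have hzG : mink n (∑ k ∈ Finset.range (d + 1), t ^ k • p.coeff k x) (D.G x)
      = ((1 - t / m) * ∑ k ∈ Finset.range (d + 1), t ^ k * gamf p D.G m k x)
          * mink n (S.F x) (D.G x) := by
    rw [mink_symm]; exact hGz
  have hGF : mink n (D.G x) (S.F x) = mink n (S.F x) (D.G x) := mink_symm n _ _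
  simp only [mink_add_left, mink_add_right, mink_sub_left, mink_sub_right,
    mink_smul_left, mink_smul_right]
  rw [hFz, hGz, hzF, hzG, S.F_null x, D.G_null x, hGF]
  ring

lemma gauge_phc (hm : m ≠ 0) (p : PolyConservedQuantity n S d) (D : DarbouxTransform n S m)
    (h0 : ∀ x, mink n (pcEval p m x) (D.G x) = 0) {t : ℝ} (ht : t ≠ m) (y : Surf) :
    gaugeG n (S.F y) (D.G y) (1 - t / m)
        (∑ k ∈ Finset.range (d + 1), t ^ k • p.coeff k y)
      = ∑ k ∈ Finset.range (d + 1), t ^ k • phcf p D.G m k y := by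
  have hc : (1 : ℝ) - t / m ≠ 0 := by
    intro h
    apply ht
    have : t / m = 1 := by linarith
    field_simp at this
    exact this
  rw [phc_sum hm p D h0 t y]
  unfold gaugeG
  rw [mink_G_sum hm p D h0 t y, mink_F_sum p D t y]
  rw [mul_div_cancel_right₀ _ (FG_ne D y), mul_div_cancel_right₀ _ (FG_ne D y)]
  rw [mul_div_cancel_left₀ _ hc]
  match_scalars <;> field_simp <;> ring

end MainLemmas2


lemma gaugeG_zero (n : ℕ) (F G : MV n) (c : ℝ) : gaugeG n F G c 0 = 0 := by
  simp [gaugeG, mink_zero_right]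

lemma phcf_top_ne {n : ℕ} {S : IsothermicSurface n} {m : ℝ} (hm : m ≠ 0) :
    ∀ {d : ℕ} (p : PolyConservedQuantity n S d) (D : DarbouxTransform n S m),
      phcf p D.G m d ≠ 0
  | 0, p, D => by
    intro h
    apply p.top_ne
    funext x
    exact congrFun h x
  | (e + 1), p, D => by
    intro h
    have halp : ∀ x, alpf p D.G e x = 0 := by
      intro x
      have hx : p.coeff (e + 1) x + ((1 / m) * gamf p D.G m e x) • S.F x
          - ((1 / m) * alpf p D.G e x) • D.G x = 0 := congrFun h x
      have hpair := congrArg (fun z => mink n (S.F x) z) hx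
      simp only [mink_add_right, mink_sub_right, mink_smul_right, mink_zero_right] at hpair
      rw [Fpd_zero hm p D x, S.F_null x] at hpair
      have hFG := FG_ne D x
      have hz : (1 / m) * alpf p D.G e x * mink n (S.F x) (D.G x) = 0 := by linarith
      have h3 := (mul_eq_zero.mp hz).resolve_right hFG
      exact (mul_eq_zero.mp h3).resolve_left (one_div_ne_zero hm)
    set lam : Surf → ℝ := fun x => -((1 / m) * gamf p D.G m e x) with hlam
    have hpd : ∀ x, p.coeff (e + 1) x = lam x • S.F x := by
      intro x
      have hx : p.coeff (e + 1) x + ((1 / m) * gamf p D.G m e x) • S.F x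
          - ((1 / m) * alpf p D.G e x) • D.G x = 0 := congrFun h x
      rw [halp x] at hx
      simp only [mul_zero, zero_smul, sub_zero] at hx
      simp only [hlam, neg_smul]
      linear_combination (norm := module) hx
    have hlam_smooth : ContDiff ℝ (⊤ : ℕ∞) lam := (contDiff_const.mul (gamf_smooth p D e)).neg
    have hzero : ∀ x, lam x = 0 := by
      intro x
      have hcc := ((cons_coeff p x) (e + 1) (by omega)).1
      simp only [Nat.succ_ne_zero, if_false, Nat.add_sub_cancel] at hcc
      have hfd : fderiv ℝ (p.coeff (e + 1)) x = fderiv ℝ (fun y => lam y • S.F y) x := by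
        congr 1
        funext y
        exact hpd y
      have hsm : HasFDerivAt (fun y => lam y • S.F y)
          (lam x • fderiv ℝ S.F x + (fderiv ℝ lam x).smulRight (S.F x)) x :=
        HasFDerivAt.smul ((hlam_smooth.differentiable (by simp) x).hasFDerivAt)
          ((S.smooth_F.differentiable (by simp) x).hasFDerivAt)
      rw [hfd, hsm.fderiv] at hcc
      have hFpe : mink n (S.F x) (p.coeff e x) = 0 := by
        have h1 := halp x
        unfold alpf at h1
        exact (div_eq_zero_iff.mp h1).resolve_right (FG_ne D x)
      have hw : wedge n (S.F x) (S.W₁ x) (p.coeff e x)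
          = (-(mink n (S.W₁ x) (p.coeff e x))) • S.F x := by
        unfold wedge
        rw [hFpe]
        module
      rw [hw] at hcc
      simp only [ContinuousLinearMap.add_apply, ContinuousLinearMap.smul_apply,
        ContinuousLinearMap.smulRight_apply] at hcc
      have key : (fderiv ℝ lam x du - mink n (S.W₁ x) (p.coeff e x)) • S.F x
          + lam x • pd du S.F x = 0 := by
        show (fderiv ℝ lam x du - mink n (S.W₁ x) (p.coeff e x)) • S.F x
          + lam x • fderiv ℝ S.F x du = 0
        linear_combination (norm := module) hcc
      exact (li_two (S.immersed x) key).2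
    apply p.top_ne
    funext x
    show p.coeff (e + 1) x = 0
    rw [hpd x, hzero x, zero_smul]

section MainLemmas3

variable {n d : ℕ} {S : IsothermicSurface n} {m : ℝ}

lemma phcf_conserved (hm : m ≠ 0) (p : PolyConservedQuantity n S d)
    (D : DarbouxTransform n S m) (h0 : ∀ x, mink n (pcEval p m x) (D.G x) = 0)
    (T : IsothermicSurface n) (hTF : T.F = D.G) (hGR : GaugeRel n S T m) :
    ∀ t : ℝ, ParallelSection n T t
      (fun x => ∑ k ∈ Finset.range (d + 1), t ^ k • phcf p D.G m k x) := by
  have hpar : ∀ t : ℝ, t ≠ m → ParallelSection n T t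
      (fun x => ∑ k ∈ Finset.range (d + 1), t ^ k • phcf p D.G m k x) := by
    intro t ht x
    have hs : ContDiff ℝ (⊤ : ℕ∞) (fun y => ∑ k ∈ Finset.range (d + 1), t ^ k • p.coeff k y) :=
      contDiff_poly_sum p.smooth (d + 1) t
    have hfun : (fun y => gaugeG n (S.F y) (T.F y) (1 - t / m)
          (∑ k ∈ Finset.range (d + 1), t ^ k • p.coeff k y))
        = (fun y => ∑ k ∈ Finset.range (d + 1), t ^ k • phcf p D.G m k y) := by
      funext y
      rw [hTF]
      exact gauge_phc hm p D h0 ht y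
    have hfx := congrFun hfun x
    have hg := hGR t ht (fun y => ∑ k ∈ Finset.range (d + 1), t ^ k • p.coeff k y) hs x
    have hz1 := (p.conserved t x).1
    have hz2 := (p.conserved t x).2
    constructor
    · have h1 := hg.1
      rw [hfun, hfx, hz1, gaugeG_zero] at h1
      exact h1
    · have h2 := hg.2
      rw [hfun, hfx, hz2, gaugeG_zero] at h2
      exact h2
  intro t x
  have hdu' : ∀ t' : ℝ, t' ≠ m → ∑ k ∈ Finset.range (d + 2), t' ^ k •
      (fderiv ℝ (phcf p D.G m k) x du + if k = 0 then 0
        else wedge n (T.F x) (T.W₁ x) (phcf p D.G m (k - 1) x)) = 0 := by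
    intro t' ht'
    rw [← parallel_poly_form d (T.F x) (T.W₁ x) (phcf p D.G m) (phcf_smooth p D)
      (phcf_gt_zero hm p D h0 (d + 1) (by omega)) x t' du]
    exact (hpar t' ht' x).1
  have hdv' : ∀ t' : ℝ, t' ≠ m → ∑ k ∈ Finset.range (d + 2), t' ^ k •
      (fderiv ℝ (phcf p D.G m k) x dv + if k = 0 then 0
        else wedge n (T.F x) (T.W₂ x) (phcf p D.G m (k - 1) x)) = 0 := by
    intro t' ht'
    rw [← parallel_poly_form d (T.F x) (T.W₂ x) (phcf p D.G m) (phcf_smooth p D)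
      (phcf_gt_zero hm p D h0 (d + 1) (by omega)) x t' dv]
    exact (hpar t' ht' x).2
  have hvdu := vec_coeffs_zero (d + 2) m _ hdu'
  have hvdv := vec_coeffs_zero (d + 2) m _ hdv'
  refine ⟨?_, ?_⟩
  · show fderiv ℝ (fun y => ∑ k ∈ Finset.range (d + 1), t ^ k • phcf p D.G m k y) x du
        + t • wedge n (T.F x) (T.W₁ x)
          (∑ k ∈ Finset.range (d + 1), t ^ k • phcf p D.G m k x) = 0
    rw [parallel_poly_form d (T.F x) (T.W₁ x) (phcf p D.G m) (phcf_smooth p D)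
      (phcf_gt_zero hm p D h0 (d + 1) (by omega)) x t du]
    exact Finset.sum_eq_zero fun k hk => by
      rw [hvdu k (Finset.mem_range.mp hk), smul_zero]
  · show fderiv ℝ (fun y => ∑ k ∈ Finset.range (d + 1), t ^ k • phcf p D.G m k y) x dv
        + t • wedge n (T.F x) (T.W₂ x)
          (∑ k ∈ Finset.range (d + 1), t ^ k • phcf p D.G m k x) = 0
    rw [parallel_poly_form d (T.F x) (T.W₂ x) (phcf p D.G m) (phcf_smooth p D)
      (phcf_gt_zero hm p D h0 (d + 1) (by omega)) x t dv]
    exact Finset.sum_eq_zero fun k hk => by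
      rw [hvdv k (Finset.mem_range.mp hk), smul_zero]

end MainLemmas3

/-- Theorem (Darboux transforms of special isothermic surfaces): `(p(m),G)` is
constant and, if it vanishes, the Darboux transform is special isothermic of
the same type `d`, with `p̂(0) = p(0)` and `(p̂(t),p̂(t)) = (p(t),p(t))`. -/
theorem darboux_transform_special (n d : ℕ) (S : IsothermicSurface n)
    (p : PolyConservedQuantity n S d) (m : ℝ) (hm : m ≠ 0)
    (D : DarbouxTransform n S m) :
    (∀ x y, mink n (pcEval p m x) (D.G x) = mink n (pcEval p m y) (D.G y))
    ∧ (∀ T : IsothermicSurface n, T.F = D.G → GaugeRel n S T m →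
        (∀ x, mink n (pcEval p m x) (D.G x) = 0) →
        ∃ ph : PolyConservedQuantity n T d,
          (∀ x, ph.coeff 0 x = p.coeff 0 x)
          ∧ ∀ t x, mink n (pcEval ph t x) (pcEval ph t x)
              = mink n (pcEval p t x) (pcEval p t x)) := by
  constructor
  · -- (p(m), G) is constant
    have hpc : ContDiff ℝ (⊤ : ℕ∞) (fun y => ∑ k ∈ Finset.range (d + 1), m ^ k • p.coeff k y) :=
      contDiff_poly_sum p.smooth (d + 1) m
    have hdiff : Differentiable ℝ (fun x => mink n (pcEval p m x) (D.G x)) :=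
      (contDiff_mink hpc D.smooth_G).differentiable (by simp)
    have hzero : ∀ z, fderiv ℝ (fun x => mink n (pcEval p m x) (D.G x)) z = 0 := by
      intro z
      have hf : DifferentiableAt ℝ (pcEval p m) z := (hpc.differentiable (by simp)) z
      have hg : DifferentiableAt ℝ D.G z := (D.smooth_G.differentiable (by simp)) z
      apply clm_zero_of_dirs
      · rw [fderiv_mink_apply hf hg du]
        have e1 : fderiv ℝ (pcEval p m) z du
            = -(m • wedge n (S.F z) (S.W₁ z) (pcEval p m z)) := by
          have hh : fderiv ℝ (pcEval p m) z du
              + m • wedge n (S.F z) (S.W₁ z) (pcEval p m z) = 0 := (p.conserved m z).1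
          exact eq_neg_of_add_eq_zero_left hh
        have e2 : fderiv ℝ D.G z du = -(m • wedge n (S.F z) (S.W₁ z) (D.G z)) := by
          have hh : fderiv ℝ D.G z du + m • wedge n (S.F z) (S.W₁ z) (D.G z) = 0 :=
            (D.parallel z).1
          exact eq_neg_of_add_eq_zero_left hh
        rw [e1, e2, ← neg_smul, ← neg_smul, mink_smul_left, mink_smul_right]
        have hskew := mink_wedge_skew n (S.F z) (S.W₁ z) (pcEval p m z) (D.G z)
        linear_combination (-m) * hskew
      · rw [fderiv_mink_apply hf hg dv]
        have e1 : fderiv ℝ (pcEval p m) z dv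
            = -(m • wedge n (S.F z) (S.W₂ z) (pcEval p m z)) := by
          have hh : fderiv ℝ (pcEval p m) z dv
              + m • wedge n (S.F z) (S.W₂ z) (pcEval p m z) = 0 := (p.conserved m z).2
          exact eq_neg_of_add_eq_zero_left hh
        have e2 : fderiv ℝ D.G z dv = -(m • wedge n (S.F z) (S.W₂ z) (D.G z)) := by
          have hh : fderiv ℝ D.G z dv + m • wedge n (S.F z) (S.W₂ z) (D.G z) = 0 :=
            (D.parallel z).2
          exact eq_neg_of_add_eq_zero_left hh
        rw [e1, e2, ← neg_smul, ← neg_smul, mink_smul_left, mink_smul_right]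
        have hskew := mink_wedge_skew n (S.F z) (S.W₂ z) (pcEval p m z) (D.G z)
        linear_combination (-m) * hskew
    exact fun x y => is_const_of_fderiv_eq_zero hdiff hzero x y
  · intro T hTF hGR h0
    refine ⟨⟨phcf p D.G m, phcf_smooth p D, phcf_gt_zero hm p D h0, phcf_top_ne hm p D,
      phcf_conserved hm p D h0 T hTF hGR⟩, fun x => rfl, fun t x => mink_phc hm p D h0 t x⟩
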